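/- arXiv:2405.08009 — 4 statements merged into one kernel-verified Lean document; each statement's English description precedes it below -/
import Mathlib

section
/- Let (G, ‖·‖) be a Banach space and R : G → G an enriched interpolative Matkowski mapping with constants a, b, c ∈ (0,1), a+b+c < 1, k ∈ [0,∞), and comparison function ζ. Then R has a fixed point s ∈ G, and for λ = 1/(k+1) the Krasnoselskij iteration p_{m+1} = (1−λ)p_m + λ R(p_m) converges to a fixed point of R for every initial point p_0 ∈ G. -/
/-!
With `λ = 1 / (k + 1)`, the averaged map `T = (1 - λ) • id + λ • R` has the same fixed points as
`R`, and `k • (p - q) + R p - R q = (k + 1) • (T p - T q)`, `p - R p = (k + 1) • (p - T p)`.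
Since the weights of the interpolative mean add up to `1`, the enriched condition on `R` says that
`T` satisfies the plain interpolative Matkowski condition for the comparison function
`t ↦ ζ ((k + 1) t) / (k + 1)`, so everything reduces to Picard iteration of `T`.

Along an orbit with no fixed point, the steps `dₙ = dist (Tⁿ x) (Tⁿ⁺¹ x)` satisfy
`dₙ₊₁ ≤ ζ dₙ`, hence tend to `0`. The gap `ζ E < E` then keeps the tail of the orbit within `E`
of `T^N x` once `d_N` is small, so the orbit is Cauchy; and the contraction inequality between the
orbit and its limit `s` forces `Tⁿ⁺¹ x → T s`, so `T s = s`.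
-/

open Filter Function Topology

structure IsComparisonFunction (ζ : ℝ → ℝ) : Prop where
  monotoneOn : MonotoneOn ζ (Set.Ici 0)
  tendsto_iterate : ∀ t, 0 < t → Tendsto (fun n => ζ^[n] t) atTop (𝓝 0)

namespace IsComparisonFunction

variable {ζ : ℝ → ℝ}

theorem lt_self (hζ : IsComparisonFunction ζ) {t : ℝ} (ht : 0 < t) : ζ t < t := by
  by_contra! h
  have hle : ∀ n, t ≤ ζ^[n] t := by
    intro n
    induction n with
    | zero => rfl
    | succ n ih =>
      rw [iterate_succ_apply']
      exact h.trans (hζ.monotoneOn ht.le (ht.le.trans ih) ih)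
  exact ht.not_ge (ge_of_tendsto' (hζ.tendsto_iterate t ht) hle)

theorem le_self (hζ : IsComparisonFunction ζ) {t : ℝ} (ht : 0 ≤ t) : ζ t ≤ t := by
  rcases ht.eq_or_lt with rfl | ht
  · by_contra! h
    exact (hζ.lt_self h).not_ge (hζ.monotoneOn Set.self_mem_Ici h.le h.le)
  · exact (hζ.lt_self ht).le

theorem rescale (hζ : IsComparisonFunction ζ) {K : ℝ} (hK : 0 < K) :
    IsComparisonFunction (fun t => K⁻¹ * ζ (K * t)) where
  monotoneOn s hs t ht hst := by
    have := hζ.monotoneOn (mul_nonneg hK.le hs) (mul_nonneg hK.le ht)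
      (mul_le_mul_of_nonneg_left hst hK.le)
    exact mul_le_mul_of_nonneg_left this (inv_nonneg.2 hK.le)
  tendsto_iterate t ht := by
    have hconj : Semiconj (K * ·) (fun t => K⁻¹ * ζ (K * t)) ζ := fun t => by
      simp only [← mul_assoc, mul_inv_cancel₀ hK.ne', one_mul]
    have hiter : ∀ n, (fun t => K⁻¹ * ζ (K * t))^[n] t = K⁻¹ * ζ^[n] (K * t) := fun n => by
      rw [← (hconj.iterate_right n).eq, ← mul_assoc, inv_mul_cancel₀ hK.ne', one_mul]
    simpa only [hiter, mul_zero] using (hζ.tendsto_iterate _ (mul_pos hK ht)).const_mul K⁻¹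

theorem tendsto_zero_of_le_apply (hζ : IsComparisonFunction ζ) {D : ℕ → ℝ}
    (hD : ∀ n, 0 ≤ D n) (hD0 : 0 < D 0) (hstep : ∀ n, D (n + 1) ≤ ζ (D n)) :
    Tendsto D atTop (𝓝 0) := by
  have hle : ∀ n, D n ≤ ζ^[n] (D 0) := by
    intro n
    induction n with
    | zero => rfl
    | succ n ih =>
      rw [iterate_succ_apply']
      exact (hstep n).trans (hζ.monotoneOn (hD n) ((hD n).trans ih) ih)
  exact tendsto_of_tendsto_of_tendsto_of_le_of_le tendsto_const_nhds
    (hζ.tendsto_iterate _ hD0) hD hle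

end IsComparisonFunction

/-- The weights `b, a, c, 1 - a - b - c` of `w, x, y, z` follow the labelling of the paper. -/
noncomputable def interpolativeMean (a b c w x y z : ℝ) : ℝ :=
  w ^ b * x ^ a * y ^ c * z ^ (1 - a - b - c)

section interpolativeMean

variable {a b c w x y z : ℝ}

theorem interpolativeMean_nonneg (hw : 0 ≤ w) (hx : 0 ≤ x) (hy : 0 ≤ y) (hz : 0 ≤ z) :
    0 ≤ interpolativeMean a b c w x y z := by
  unfold interpolativeMean; positivity

theorem interpolativeMean_le_interpolativeMean (ha : 0 ≤ a) (hb : 0 ≤ b) (hc : 0 ≤ c)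
    (habc : a + b + c ≤ 1) {w' x' y' z' : ℝ} (hw : 0 ≤ w) (hx : 0 ≤ x) (hy : 0 ≤ y) (hz : 0 ≤ z)
    (hww : w ≤ w') (hxx : x ≤ x') (hyy : y ≤ y') (hzz : z ≤ z') :
    interpolativeMean a b c w x y z ≤ interpolativeMean a b c w' x' y' z' := by
  have he : 0 ≤ 1 - a - b - c := by linarith
  have := hw.trans hww; have := hx.trans hxx; have := hy.trans hyy
  unfold interpolativeMean; gcongr

theorem interpolativeMean_self (hx : 0 < x) : interpolativeMean a b c x x x x = x := by
  rw [interpolativeMean, ← Real.rpow_add hx, ← Real.rpow_add hx, ← Real.rpow_add hx,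
    show b + a + c + (1 - a - b - c) = 1 by ring, Real.rpow_one]

theorem interpolativeMean_le (ha : 0 ≤ a) (hb : 0 ≤ b) (hc : 0 ≤ c) (habc : a + b + c ≤ 1)
    {m : ℝ} (hm : 0 < m) (hw : 0 ≤ w) (hx : 0 ≤ x) (hy : 0 ≤ y) (hz : 0 ≤ z)
    (hwm : w ≤ m) (hxm : x ≤ m) (hym : y ≤ m) (hzm : z ≤ m) :
    interpolativeMean a b c w x y z ≤ m :=
  (interpolativeMean_le_interpolativeMean ha hb hc habc hw hx hy hz hwm hxm hym hzm).trans_eq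
    (interpolativeMean_self hm)

theorem interpolativeMean_mul {K : ℝ} (hK : 0 < K) (hw : 0 ≤ w) (hx : 0 ≤ x) (hy : 0 ≤ y)
    (hz : 0 ≤ z) :
    interpolativeMean a b c (K * w) (K * x) (K * y) (K * z) =
      K * interpolativeMean a b c w x y z := by
  simp only [interpolativeMean, Real.mul_rpow hK.le, hw, hx, hy, hz]
  calc _ = (K ^ b * K ^ a * K ^ c * K ^ (1 - a - b - c)) *
        (w ^ b * x ^ a * y ^ c * z ^ (1 - a - b - c)) := by ring
    _ = _ := by rw [← interpolativeMean, interpolativeMean_self hK]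

theorem interpolativeMean_zero_second (ha : 0 < a) : interpolativeMean a b c w 0 y z = 0 := by
  simp [interpolativeMean, Real.zero_rpow ha.ne']

theorem Filter.Tendsto.interpolativeMean {ι : Type*} {l : Filter ι} {w' x' y' z' : ι → ℝ}
    (ha : 0 ≤ a) (hb : 0 ≤ b) (hc : 0 ≤ c) (habc : a + b + c ≤ 1)
    (hw : Tendsto w' l (𝓝 w)) (hx : Tendsto x' l (𝓝 x)) (hy : Tendsto y' l (𝓝 y))
    (hz : Tendsto z' l (𝓝 z)) :
    Tendsto (fun i => interpolativeMean a b c (w' i) (x' i) (y' i) (z' i)) l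
      (𝓝 (interpolativeMean a b c w x y z)) :=
  (((hw.rpow_const (.inr hb)).mul (hx.rpow_const (.inr ha))).mul
    (hy.rpow_const (.inr hc))).mul (hz.rpow_const (.inr (by linarith)))

end interpolativeMean

section MetricSpace

variable {X : Type*} [MetricSpace X]

def IsInterpolativeMatkowski (ζ : ℝ → ℝ) (a b c : ℝ) (T : X → X) : Prop :=
  ∀ x y, ¬IsFixedPt T x → ¬IsFixedPt T y →
    dist (T x) (T y) ≤
      ζ (interpolativeMean a b c (dist x y) (dist x (T x)) (dist y (T y))
        ((dist x (T y) + dist y (T x)) / 2))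

namespace IsInterpolativeMatkowski

variable {T : X → X} {ζ : ℝ → ℝ} {a b c : ℝ}

theorem dist_apply_apply_le (hζ : IsComparisonFunction ζ) (hT : IsInterpolativeMatkowski ζ a b c T)
    (ha : 0 ≤ a) (hb : 0 ≤ b) (hc : 0 ≤ c) (habc : a + b + c ≤ 1) {x : X}
    (hx : ¬IsFixedPt T x) (hTx : ¬IsFixedPt T (T x)) :
    dist (T x) (T (T x)) ≤ ζ (dist x (T x)) := by
  set d₀ := dist x (T x)
  set d₁ := dist (T x) (T (T x))
  have hd₁ : 0 < d₁ := dist_pos.2 (Ne.symm hTx)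
  have hm : 0 < max d₀ d₁ := hd₁.trans_le (le_max_right _ _)
  have hmean : interpolativeMean a b c d₀ d₀ d₁ ((dist x (T (T x)) + dist (T x) (T x)) / 2) ≤
      max d₀ d₁ := by
    refine interpolativeMean_le ha hb hc habc hm dist_nonneg dist_nonneg dist_nonneg
      (by positivity) (le_max_left _ _) (le_max_left _ _) (le_max_right _ _) ?_
    have := dist_triangle x (T x) (T (T x))
    rw [dist_self]
    linarith [le_max_left d₀ d₁, le_max_right d₀ d₁]
  -- the maximum cannot be `d₁`, since `ζ d₁ < d₁`
  have key : d₁ ≤ ζ (max d₀ d₁) :=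
    (hT x (T x) hx hTx).trans (hζ.monotoneOn (interpolativeMean_nonneg dist_nonneg
      dist_nonneg dist_nonneg (by positivity)) hm.le hmean)
  rcases max_cases d₀ d₁ with ⟨hmax, -⟩ | ⟨hmax, -⟩
  · rwa [hmax] at key
  · rw [hmax] at key
    exact absurd key (hζ.lt_self hd₁).not_ge

section Orbit

variable {x : X}

theorem antitone_dist_iterate (hζ : IsComparisonFunction ζ)
    (hT : IsInterpolativeMatkowski ζ a b c T) (ha : 0 ≤ a) (hb : 0 ≤ b) (hc : 0 ≤ c)
    (habc : a + b + c ≤ 1) (hu : ∀ n, ¬IsFixedPt T (T^[n] x)) :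
    Antitone fun n => dist (T^[n] x) (T (T^[n] x)) := by
  refine antitone_nat_of_succ_le fun n => ?_
  have hn1 := hu (n + 1)
  rw [iterate_succ_apply'] at hn1 ⊢
  exact (hT.dist_apply_apply_le hζ ha hb hc habc (hu n) hn1).trans (hζ.le_self dist_nonneg)

theorem tendsto_dist_iterate (hζ : IsComparisonFunction ζ)
    (hT : IsInterpolativeMatkowski ζ a b c T) (ha : 0 ≤ a) (hb : 0 ≤ b) (hc : 0 ≤ c)
    (habc : a + b + c ≤ 1) (hu : ∀ n, ¬IsFixedPt T (T^[n] x)) :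
    Tendsto (fun n => dist (T^[n] x) (T (T^[n] x))) atTop (𝓝 0) := by
  refine hζ.tendsto_zero_of_le_apply (fun _ => dist_nonneg) (dist_pos.2 (Ne.symm (hu 0)))
    fun n => ?_
  have hn1 := hu (n + 1)
  rw [iterate_succ_apply'] at hn1 ⊢
  exact hT.dist_apply_apply_le hζ ha hb hc habc (hu n) hn1

/-- Once a step `dist (T^[N] x) (T^[N+1] x)` is small compared with `E - ζ E`, the orbit
never leaves the closed ball of radius `E` around `T^[N] x`. -/
theorem dist_iterate_le (hζ : IsComparisonFunction ζ)
    (hT : IsInterpolativeMatkowski ζ a b c T) (ha : 0 ≤ a) (hb : 0 ≤ b) (hc : 0 ≤ c)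
    (habc : a + b + c ≤ 1) (hu : ∀ n, ¬IsFixedPt T (T^[n] x)) {E : ℝ} {N : ℕ} (hE : 0 ≤ E)
    (hstep : dist (T^[N] x) (T (T^[N] x)) ≤ E - ζ E)
    (hmean : interpolativeMean a b c E (dist (T^[N] x) (T (T^[N] x)))
      (dist (T^[N] x) (T (T^[N] x))) (E + dist (T^[N] x) (T (T^[N] x))) ≤ E) :
    ∀ n ≥ N, dist (T^[n] x) (T^[N] x) ≤ E := by
  set D := fun n => dist (T^[n] x) (T (T^[n] x))
  have hanti := hT.antitone_dist_iterate hζ ha hb hc habc hu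
  intro n hn
  induction n, hn using Nat.le_induction with
  | base => simpa using hE
  | succ n hn ih =>
    have h₁ := dist_triangle (T^[n] x) (T^[N] x) (T (T^[N] x))
    have h₂ := dist_triangle (T^[N] x) (T^[n] x) (T (T^[n] x))
    have hDn : D n ≤ D N := hanti hn
    rw [dist_comm (T^[N] x) (T^[n] x)] at h₂
    have hbound : interpolativeMean a b c (dist (T^[n] x) (T^[N] x)) (D n) (D N)
        ((dist (T^[n] x) (T (T^[N] x)) + dist (T^[N] x) (T (T^[n] x))) / 2) ≤ E :=
      (interpolativeMean_le_interpolativeMean ha hb hc habc dist_nonneg dist_nonneg dist_nonneg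
        (by positivity) ih hDn le_rfl (by linarith)).trans hmean
    have hζE : dist (T (T^[n] x)) (T (T^[N] x)) ≤ ζ E :=
      (hT _ _ (hu n) (hu N)).trans (hζ.monotoneOn (interpolativeMean_nonneg dist_nonneg
        dist_nonneg dist_nonneg (by positivity)) hE hbound)
    rw [iterate_succ_apply']
    linarith [dist_triangle (T (T^[n] x)) (T (T^[N] x)) (T^[N] x),
      dist_comm (T (T^[N] x)) (T^[N] x)]

theorem cauchySeq_iterate (hζ : IsComparisonFunction ζ)
    (hT : IsInterpolativeMatkowski ζ a b c T) (ha : 0 < a) (hb : 0 ≤ b) (hc : 0 ≤ c)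
    (habc : a + b + c ≤ 1) (hu : ∀ n, ¬IsFixedPt T (T^[n] x)) :
    CauchySeq fun n => T^[n] x := by
  refine Metric.cauchySeq_iff'.2 fun ε hε => ?_
  have hE : 0 < ε / 2 := half_pos hε
  have hD := hT.tendsto_dist_iterate hζ ha.le hb hc habc hu
  have hmean := (tendsto_const_nhds (x := ε / 2)).interpolativeMean ha.le hb hc habc hD hD
    ((tendsto_const_nhds (x := ε / 2)).add hD)
  rw [interpolativeMean_zero_second ha] at hmean
  obtain ⟨N, hN₁, hN₂⟩ := ((hD.eventually_le_const (sub_pos.2 (hζ.lt_self hE))).and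
    (hmean.eventually_le_const hE)).exists
  exact ⟨N, fun n hn => (hT.dist_iterate_le hζ ha.le hb hc habc hu hE.le hN₁ hN₂ n hn).trans_lt
    (half_lt_self hε)⟩

theorem isFixedPt_of_tendsto_iterate (hζ : IsComparisonFunction ζ)
    (hT : IsInterpolativeMatkowski ζ a b c T) (ha : 0 < a) (hb : 0 ≤ b) (hc : 0 ≤ c)
    (habc : a + b + c ≤ 1) (hu : ∀ n, ¬IsFixedPt T (T^[n] x)) {s : X}
    (hs : Tendsto (fun n => T^[n] x) atTop (𝓝 s)) : IsFixedPt T s := by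
  by_contra hTs
  have hs₁ : Tendsto (fun n => T (T^[n] x)) atTop (𝓝 s) := by
    simpa only [iterate_succ_apply'] using (tendsto_add_atTop_iff_nat 1).2 hs
  have hdist (p : X) : Tendsto (fun n => dist (T^[n] x) p) atTop (𝓝 (dist s p)) :=
    hs.dist tendsto_const_nhds
  have hle : ∀ n, dist (T (T^[n] x)) (T s) ≤ interpolativeMean a b c (dist (T^[n] x) s)
      (dist (T^[n] x) (T (T^[n] x))) (dist s (T s))
      ((dist (T^[n] x) (T s) + dist s (T (T^[n] x))) / 2) := fun n =>
    (hT _ _ (hu n) hTs).trans (hζ.le_self (interpolativeMean_nonneg dist_nonneg dist_nonneg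
      dist_nonneg (by positivity)))
  have hmean := (hdist s).interpolativeMean ha.le hb hc habc
    (hT.tendsto_dist_iterate hζ ha.le hb hc habc hu) (tendsto_const_nhds (x := dist s (T s)))
    (((hdist (T s)).add ((tendsto_const_nhds (x := s)).dist hs₁)).div_const 2)
  rw [interpolativeMean_zero_second ha] at hmean
  have hTs₁ : Tendsto (fun n => T (T^[n] x)) atTop (𝓝 (T s)) :=
    tendsto_iff_dist_tendsto_zero.2 (squeeze_zero (fun _ => dist_nonneg) hle hmean)
  exact hTs (tendsto_nhds_unique hTs₁ hs₁)

end Orbit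

theorem exists_isFixedPt_tendsto_iterate [CompleteSpace X] (hζ : IsComparisonFunction ζ)
    (hT : IsInterpolativeMatkowski ζ a b c T) (ha : 0 < a) (hb : 0 ≤ b) (hc : 0 ≤ c)
    (habc : a + b + c ≤ 1) (x : X) :
    ∃ s, IsFixedPt T s ∧ Tendsto (fun n => T^[n] x) atTop (𝓝 s) := by
  by_cases h : ∃ m, IsFixedPt T (T^[m] x)
  · obtain ⟨m, hm⟩ := h
    refine ⟨_, hm, tendsto_atTop_of_eventually_const (i₀ := m) fun n hn => ?_⟩
    obtain ⟨j, rfl⟩ := Nat.exists_eq_add_of_le' hn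
    rw [iterate_add_apply, (hm.iterate j).eq]
  · push Not at h
    obtain ⟨s, hs⟩ := cauchySeq_tendsto_of_complete (hT.cauchySeq_iterate hζ ha hb hc habc h)
    exact ⟨s, hT.isFixedPt_of_tendsto_iterate hζ ha hb hc habc h hs, hs⟩

end IsInterpolativeMatkowski

end MetricSpace

def krasnoselskijMap {G : Type*} [AddCommGroup G] [Module ℝ G] (t : ℝ) (R : G → G) (p : G) : G :=
  (1 - t) • p + t • R p

section Krasnoselskij

variable {G : Type*} [AddCommGroup G] [Module ℝ G] {R : G → G} {k : ℝ}

theorem smul_krasnoselskijMap_sub_krasnoselskijMap (hk : k + 1 ≠ 0) (p q : G) :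
    (k + 1) • (krasnoselskijMap (1 / (k + 1)) R p - krasnoselskijMap (1 / (k + 1)) R q) =
      k • (p - q) + R p - R q := by
  simp only [krasnoselskijMap]
  match_scalars <;> grind

theorem smul_sub_krasnoselskijMap (hk : k + 1 ≠ 0) (p q : G) :
    (k + 1) • (p - krasnoselskijMap (1 / (k + 1)) R q) = (k + 1) • (p - q) + q - R q := by
  simp only [krasnoselskijMap]
  match_scalars <;> grind

theorem smul_sub_krasnoselskijMap_self (hk : k + 1 ≠ 0) (p : G) :
    (k + 1) • (p - krasnoselskijMap (1 / (k + 1)) R p) = p - R p := by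
  simpa using smul_sub_krasnoselskijMap (R := R) hk p p

theorem isFixedPt_krasnoselskijMap_iff (hk : k + 1 ≠ 0) {p : G} :
    IsFixedPt (krasnoselskijMap (1 / (k + 1)) R) p ↔ R p = p := by
  rw [IsFixedPt, eq_comm, ← sub_eq_zero, ← smul_eq_zero_iff_right hk,
    smul_sub_krasnoselskijMap_self hk, sub_eq_zero, eq_comm]

end Krasnoselskij

section Enriched

variable {G : Type*} [NormedAddCommGroup G] [NormedSpace ℝ G]

def IsEnrichedInterpolativeMatkowski (k : ℝ) (ζ : ℝ → ℝ) (a b c : ℝ) (R : G → G) : Prop :=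
  ∀ p q : G, R p ≠ p → R q ≠ q →
    ‖k • (p - q) + R p - R q‖ ≤
      ζ (‖(k + 1) • (p - q)‖ ^ b * ‖p - R p‖ ^ a * ‖q - R q‖ ^ c *
        ((1 / 2) * (‖(k + 1) • (p - q) + q - R q‖ + ‖(k + 1) • (q - p) + p - R p‖)) ^
          (1 - a - b - c))

theorem IsEnrichedInterpolativeMatkowski.isInterpolativeMatkowski_krasnoselskijMap {k : ℝ}
    {ζ : ℝ → ℝ} {a b c : ℝ} {R : G → G} (hR : IsEnrichedInterpolativeMatkowski k ζ a b c R)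
    (hk : 0 < k + 1) :
    IsInterpolativeMatkowski (fun t => (k + 1)⁻¹ * ζ ((k + 1) * t)) a b c
      (krasnoselskijMap (1 / (k + 1)) R) := by
  set T := krasnoselskijMap (1 / (k + 1)) R
  have hnorm (v : G) : ‖(k + 1) • v‖ = (k + 1) * ‖v‖ := norm_smul_of_nonneg hk.le v
  have hdisp (p : G) : ‖p - R p‖ = (k + 1) * dist p (T p) := by
    rw [← smul_sub_krasnoselskijMap_self hk.ne', hnorm, dist_eq_norm]
  have hcross (p q : G) : ‖(k + 1) • (p - q) + q - R q‖ = (k + 1) * dist p (T q) := by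
    rw [← smul_sub_krasnoselskijMap hk.ne', hnorm, dist_eq_norm]
  intro p q hp hq
  have h := hR p q (mt (isFixedPt_krasnoselskijMap_iff hk.ne').2 hp)
    (mt (isFixedPt_krasnoselskijMap_iff hk.ne').2 hq)
  rw [← smul_krasnoselskijMap_sub_krasnoselskijMap hk.ne', hnorm, hnorm, ← dist_eq_norm,
    ← dist_eq_norm, hdisp, hdisp, hcross, hcross,
    show ∀ x y : ℝ, 1 / 2 * ((k + 1) * x + (k + 1) * y) = (k + 1) * ((x + y) / 2) by
      intros; ring] at h
  rw [le_inv_mul_iff₀ hk, ← interpolativeMean_mul hk dist_nonneg dist_nonneg dist_nonneg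
    (by positivity)]
  exact h

end Enriched

theorem stmt_2_general {G : Type*} [NormedAddCommGroup G] [NormedSpace ℝ G] [CompleteSpace G]
    (R : G → G) (a b c k : ℝ) (ζ : ℝ → ℝ)
    (ha : a ∈ Set.Ioo (0:ℝ) 1) (hb : b ∈ Set.Ioo (0:ℝ) 1) (hc : c ∈ Set.Ioo (0:ℝ) 1)
    (habc : a + b + c < 1) (hk : 0 ≤ k)
    (hζmono : ∀ s t : ℝ, 0 ≤ s → s ≤ t → ζ s ≤ ζ t)
    (hζiter : ∀ t : ℝ, 0 < t → Tendsto (fun n => ζ^[n] t) atTop (nhds 0))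
    (hR : ∀ p q : G, R p ≠ p → R q ≠ q →
      ‖k • (p - q) + R p - R q‖ ≤
        ζ (‖(k + 1) • (p - q)‖ ^ b * ‖p - R p‖ ^ a * ‖q - R q‖ ^ c *
          ((1 / 2) * (‖(k + 1) • (p - q) + q - R q‖ + ‖(k + 1) • (q - p) + p - R p‖)) ^
            (1 - a - b - c))) :
    (∃ s : G, R s = s) ∧
      ∀ p₀ : G, ∃ s : G, R s = s ∧
        Tendsto (fun m => (fun p => (1 - 1 / (k + 1)) • p + (1 / (k + 1)) • R p)^[m] p₀)
          atTop (nhds s) := by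
  have hk₁ : 0 < k + 1 := by linarith
  have hζ : IsComparisonFunction ζ := ⟨fun s hs t _ hst => hζmono s t hs hst, hζiter⟩
  have hT := IsEnrichedInterpolativeMatkowski.isInterpolativeMatkowski_krasnoselskijMap hR hk₁
  have hconv (p₀ : G) : ∃ s : G, R s = s ∧
      Tendsto (fun m => (krasnoselskijMap (1 / (k + 1)) R)^[m] p₀) atTop (𝓝 s) := by
    obtain ⟨s, hs, hlim⟩ := hT.exists_isFixedPt_tendsto_iterate (hζ.rescale hk₁) ha.1 hb.1.le
      hc.1.le habc.le p₀
    exact ⟨s, (isFixedPt_krasnoselskijMap_iff hk₁.ne').1 hs, hlim⟩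
  exact ⟨(hconv 0).imp fun _ hs => hs.1, hconv⟩

theorem stmt_2 {G : Type*} [NormedAddCommGroup G] [NormedSpace ℝ G] [CompleteSpace G]
    (R : G → G) (a b c k : ℝ) (ζ : ℝ → ℝ)
    (ha : a ∈ Set.Ioo (0:ℝ) 1) (hb : b ∈ Set.Ioo (0:ℝ) 1) (hc : c ∈ Set.Ioo (0:ℝ) 1)
    (habc : a + b + c < 1) (hk : 0 ≤ k)
    (hζnonneg : ∀ t : ℝ, 0 ≤ t → 0 ≤ ζ t)
    (hζmono : ∀ s t : ℝ, 0 ≤ s → s ≤ t → ζ s ≤ ζ t)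
    (hζiter : ∀ t : ℝ, 0 < t → Tendsto (fun n => ζ^[n] t) atTop (nhds 0))
    (hR : ∀ p q : G, R p ≠ p → R q ≠ q →
      ‖k • (p - q) + R p - R q‖ ≤
        ζ (‖(k + 1) • (p - q)‖ ^ b * ‖p - R p‖ ^ a * ‖q - R q‖ ^ c *
          ((1 / 2) * (‖(k + 1) • (p - q) + q - R q‖ + ‖(k + 1) • (q - p) + p - R p‖)) ^
            (1 - a - b - c))) :
    (∃ s : G, R s = s) ∧
      ∀ p₀ : G, ∃ s : G, R s = s ∧
        Tendsto (fun m => (fun p => (1 - 1 / (k + 1)) • p + (1 / (k + 1)) • R p)^[m] p₀)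
          atTop (nhds s) :=
  stmt_2_general R a b c k ζ ha hb hc habc hk hζmono hζiter hR
end

section
/- Let (G, ‖·‖) be a Banach space and R : G → G an enriched interpolative Matkowski mapping with constants k ≥ 0 and a,b,c ∈ (0,1), a+b+c<1. Set λ = 1/(k+1) and R_λ(p) = (1−λ)p + λR(p). Then R_λ satisfies the (un-enriched) interpolative Matkowski condition with modified comparison function t ↦ λ·ζ(t/λ): for all p, q not fixed points of R_λ, ‖R_λ p − R_λ q‖ ≤ λ ζ( (1/λ) ‖p−q‖^b ‖p − R_λ p‖^a ‖q − R_λ q‖^c ( (1/2)(‖p − R_λ q‖ + ‖q − R_λ p‖) )^{1−a−b−c} ). -/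
/-!
With `λ (k + 1) = 1`, every quantity in the enriched condition for `R` is `k + 1` times the
matching quantity for `R_λ`: `R_λ p - R_λ q = λ • (k • (p - q) + R p - R q)`,
`p - R p = (k + 1) • (p - R_λ p)`, and `(k + 1) • (p - q) + q - R q = (k + 1) • (p - R_λ q)`.
Since the exponents `b, a, c, 1 - a - b - c` sum to `1`, the interpolative product is
homogeneous of degree one, so the factor `k + 1 = 1 / λ` moves outside it; the factor `λ`
in front comes from the left-hand side. `R_λ` and `R` have the same fixed points since `λ ≠ 0`.
-/

open Filter

section AveragedMap

variable {𝕜 E : Type*} [Field 𝕜] [AddCommGroup E] [Module 𝕜 E]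

def averagedMap (lam : 𝕜) (T : E → E) (p : E) : E := (1 - lam) • p + lam • T p

theorem averagedMap_eq_self_iff {lam : 𝕜} (hlam : lam ≠ 0) (T : E → E) (p : E) :
    averagedMap lam T p = p ↔ T p = p := by
  have h : averagedMap lam T p - p = lam • (T p - p) := by
    unfold averagedMap; module
  rw [← sub_eq_zero, h, smul_eq_zero_iff_right hlam, sub_eq_zero]

variable {lam k : 𝕜} (hlk : lam * (k + 1) = 1) (T : E → E) (p q : E)
include hlk

theorem smul_sub_averagedMap : (k + 1) • (p - averagedMap lam T p) = p - T p := by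
  unfold averagedMap
  linear_combination (norm := module) hlk • (p - T p)

theorem averagedMap_sub_averagedMap :
    averagedMap lam T p - averagedMap lam T q = lam • (k • (p - q) + T p - T q) := by
  unfold averagedMap
  linear_combination (norm := module) -hlk • (p - q)

theorem smul_sub_add_sub_eq_smul_sub_averagedMap :
    (k + 1) • (p - q) + q - T q = (k + 1) • (p - averagedMap lam T q) := by
  unfold averagedMap
  linear_combination (norm := module) hlk • (T q - q)

end AveragedMap

theorem mul_rpow_prod_of_sum_eq_one {μ x y z w e₁ e₂ e₃ e₄ : ℝ} (hμ : 0 < μ)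
    (hx : 0 ≤ x) (hy : 0 ≤ y) (hz : 0 ≤ z) (hw : 0 ≤ w) (he : e₁ + e₂ + e₃ + e₄ = 1) :
    (μ * x) ^ e₁ * (μ * y) ^ e₂ * (μ * z) ^ e₃ * (μ * w) ^ e₄
      = μ * (x ^ e₁ * y ^ e₂ * z ^ e₃ * w ^ e₄) := by
  have hμe : μ ^ e₁ * μ ^ e₂ * μ ^ e₃ * μ ^ e₄ = μ := by
    rw [← Real.rpow_add hμ, ← Real.rpow_add hμ, ← Real.rpow_add hμ, he, Real.rpow_one]
  simp only [Real.mul_rpow hμ.le, hx, hy, hz, hw]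
  linear_combination (x ^ e₁ * y ^ e₂ * z ^ e₃ * w ^ e₄) * hμe

theorem stmt_3_general {G : Type*} [NormedAddCommGroup G] [NormedSpace ℝ G]
    (R : G → G) (a b c k : ℝ) (ζ : ℝ → ℝ)
    (hk : 0 ≤ k)
    (hR : ∀ p q : G, R p ≠ p → R q ≠ q →
      ‖k • (p - q) + R p - R q‖ ≤
        ζ (‖(k + 1) • (p - q)‖ ^ b * ‖p - R p‖ ^ a * ‖q - R q‖ ^ c *
          ((1 / 2) * (‖(k + 1) • (p - q) + q - R q‖ + ‖(k + 1) • (q - p) + p - R p‖)) ^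
            (1 - a - b - c)))
    (lam : ℝ) (hlam : lam = 1 / (k + 1))
    (Rl : G → G) (hRl : ∀ p, Rl p = (1 - lam) • p + lam • R p) :
    ∀ p q : G, Rl p ≠ p → Rl q ≠ q →
      ‖Rl p - Rl q‖ ≤
        lam * ζ ((1 / lam) * (‖p - q‖ ^ b * ‖p - Rl p‖ ^ a * ‖q - Rl q‖ ^ c *
          ((1 / 2) * (‖p - Rl q‖ + ‖q - Rl p‖)) ^ (1 - a - b - c))) := by
  intro p q hp hq
  obtain rfl : Rl = averagedMap lam R := funext hRl
  have hk1 : 0 < k + 1 := by linarith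
  have hlk : lam * (k + 1) = 1 := by rw [hlam, one_div_mul_cancel hk1.ne']
  have hlam0 : 0 < lam := by rw [hlam]; positivity
  have hRp : R p ≠ p := by rwa [Ne, ← averagedMap_eq_self_iff hlam0.ne']
  have hRq : R q ≠ q := by rwa [Ne, ← averagedMap_eq_self_iff hlam0.ne']
  calc ‖averagedMap lam R p - averagedMap lam R q‖ = lam * ‖k • (p - q) + R p - R q‖ := by
        rw [averagedMap_sub_averagedMap hlk, norm_smul_of_nonneg hlam0.le]
    _ ≤ lam * _ := mul_le_mul_of_nonneg_left (hR p q hRp hRq) hlam0.le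
    _ = _ := by
      rw [← smul_sub_averagedMap hlk R p, ← smul_sub_averagedMap hlk R q,
        smul_sub_add_sub_eq_smul_sub_averagedMap hlk, smul_sub_add_sub_eq_smul_sub_averagedMap hlk,
        norm_smul_of_nonneg hk1.le, norm_smul_of_nonneg hk1.le, norm_smul_of_nonneg hk1.le,
        norm_smul_of_nonneg hk1.le, norm_smul_of_nonneg hk1.le, ← mul_add, mul_left_comm,
        mul_rpow_prod_of_sum_eq_one hk1 (norm_nonneg _) (norm_nonneg _) (norm_nonneg _)
          (by positivity) (by ring), hlam, one_div_one_div]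

theorem stmt_3 {G : Type*} [NormedAddCommGroup G] [NormedSpace ℝ G] [CompleteSpace G]
    (R : G → G) (a b c k : ℝ) (ζ : ℝ → ℝ)
    (ha : a ∈ Set.Ioo (0:ℝ) 1) (hb : b ∈ Set.Ioo (0:ℝ) 1) (hc : c ∈ Set.Ioo (0:ℝ) 1)
    (habc : a + b + c < 1) (hk : 0 ≤ k)
    (hζnonneg : ∀ t : ℝ, 0 ≤ t → 0 ≤ ζ t)
    (hζmono : ∀ s t : ℝ, 0 ≤ s → s ≤ t → ζ s ≤ ζ t)
    (hζiter : ∀ t : ℝ, 0 < t → Tendsto (fun n => ζ^[n] t) atTop (nhds 0))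
    (hR : ∀ p q : G, R p ≠ p → R q ≠ q →
      ‖k • (p - q) + R p - R q‖ ≤
        ζ (‖(k + 1) • (p - q)‖ ^ b * ‖p - R p‖ ^ a * ‖q - R q‖ ^ c *
          ((1 / 2) * (‖(k + 1) • (p - q) + q - R q‖ + ‖(k + 1) • (q - p) + p - R p‖)) ^
            (1 - a - b - c)))
    (lam : ℝ) (hlam : lam = 1 / (k + 1))
    (Rl : G → G) (hRl : ∀ p, Rl p = (1 - lam) • p + lam • R p) :
    ∀ p q : G, Rl p ≠ p → Rl q ≠ q →
      ‖Rl p - Rl q‖ ≤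
        lam * ζ ((1 / lam) * (‖p - q‖ ^ b * ‖p - Rl p‖ ^ a * ‖q - Rl q‖ ^ c *
          ((1 / 2) * (‖p - Rl q‖ + ‖q - Rl p‖)) ^ (1 - a - b - c))) :=
  stmt_3_general R a b c k ζ hk hR lam hlam Rl hRl
end

section
/- Let G = ℝ³ with the ℓ¹ norm ‖(p,q,r)‖ = |p|+|q|+|r|, R(z) = −z/2, k = 1/2, ζ(t) = t/14. Then ‖k(x−y) + Rx − Ry‖ = 0 for all x, y ∈ ℝ³, so R is an enriched interpolative Matkowski mapping, but R fails the interpolative Matkowski condition with ζ(t)=t/14 and exponents b = 1/2, a = c = 1/8 at the points x = (2,2,2), y = (−2,−2,−2): indeed ‖Rx − Ry‖ = 6 while ζ( ‖x−y‖^b ‖x−Rx‖^a ‖y−Ry‖^c ((1/2)(‖x−Ry‖+‖y−Rx‖))^{1−a−b−c} ) < 1. -/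
/-!
Since `R = -k • id`, the enriched expression `k • (u - v) + R u - R v` vanishes identically.
At `x = 2 • 𝟙` and `y = -x` (with `𝟙` the all-ones vector, `‖𝟙‖₁ = 3`) every vector in the
Matkowski condition is a multiple of `𝟙`: the distances are `12, 9, 9, 3, 3` and `‖Rx - Ry‖ = 6`,
so the right-hand side is `12^(1/2) 9^(1/8) 9^(1/8) 3^(1/4) / 14 = 6 · 3^(1/4) / 14 < 1`.
-/

open WithLp

lemma smul_sub_add_sub_eq_zero_of_forall_eq_neg_smul {E : Type*} [AddCommGroup E] [Module ℝ E]
    {R : E → E} {k : ℝ} (hR : ∀ z, R z = -k • z) (u v : E) : k • (u - v) + R u - R v = 0 := by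
  rw [hR, hR]
  module

lemma Real.rpow_one_div_lt_of_lt_pow {x y : ℝ} {n : ℕ} (hn : n ≠ 0) (hx : 0 ≤ x) (hy : 0 ≤ y)
    (h : x < y ^ n) : x ^ (1 / n : ℝ) < y := by
  rwa [one_div, Real.rpow_inv_lt_iff_of_pos hx hy (by positivity), Real.rpow_natCast]

lemma matkowski_product_lt :
    (12 : ℝ) ^ (1 / 2 : ℝ) * 9 ^ (1 / 8 : ℝ) * 9 ^ (1 / 8 : ℝ) * 3 ^ (1 / 4 : ℝ) < 14 := by
  have h12 := Real.rpow_one_div_lt_of_lt_pow (x := 12) (y := 7 / 2) (n := 2)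
    (by norm_num) (by norm_num) (by norm_num) (by norm_num)
  have h9 := Real.rpow_one_div_lt_of_lt_pow (x := 9) (y := 3 / 2) (n := 8)
    (by norm_num) (by norm_num) (by norm_num) (by norm_num)
  have h3 := Real.rpow_one_div_lt_of_lt_pow (x := 3) (y := 4 / 3) (n := 4)
    (by norm_num) (by norm_num) (by norm_num) (by norm_num)
  push_cast at h12 h9 h3
  calc (12 : ℝ) ^ (1 / 2 : ℝ) * 9 ^ (1 / 8 : ℝ) * 9 ^ (1 / 8 : ℝ) * 3 ^ (1 / 4 : ℝ)
      < 7 / 2 * (3 / 2) * (3 / 2) * (4 / 3) := by gcongr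
    _ < 14 := by norm_num

lemma norm_smul_toLp_one_fin_three (t : ℝ) : ‖t • toLp 1 (1 : Fin 3 → ℝ)‖ = |t| * 3 := by
  simp [norm_smul, PiLp.norm_toLp_one]

theorem stmt_7 (ζ : ℝ → ℝ) (hζ : ζ = fun t => t / 14)
    (R : PiLp 1 (fun _ : Fin 3 => ℝ) → PiLp 1 (fun _ : Fin 3 => ℝ))
    (hR : ∀ z, R z = -(1 / 2 : ℝ) • z)
    (k : ℝ) (hk : k = 1 / 2)
    (a b c : ℝ) (ha : a = 1 / 8) (hb : b = 1 / 2) (hc : c = 1 / 8)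
    (x y : PiLp 1 (fun _ : Fin 3 => ℝ))
    (hx : x = (WithLp.equiv 1 (Fin 3 → ℝ)).symm ![2, 2, 2])
    (hy : y = (WithLp.equiv 1 (Fin 3 → ℝ)).symm ![-2, -2, -2]) :
    (∀ u v : PiLp 1 (fun _ : Fin 3 => ℝ), ‖k • (u - v) + R u - R v‖ = 0) ∧
      ‖R x - R y‖ = 6 ∧
      ζ (‖x - y‖ ^ b * ‖x - R x‖ ^ a * ‖y - R y‖ ^ c *
        ((1 / 2) * (‖x - R y‖ + ‖y - R x‖)) ^ (1 - a - b - c)) < 1 := by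
  subst hζ hk ha hb hc
  set e := toLp 1 (1 : Fin 3 → ℝ)
  have hxe : x = (2 : ℝ) • e := by rw [hx]; ext i; fin_cases i <;> simp [e]
  have hye : y = (-2 : ℝ) • e := by rw [hy]; ext i; fin_cases i <;> simp [e]
  have hnorm : ∀ t : ℝ, ‖t • e‖ = |t| * 3 := norm_smul_toLp_one_fin_three
  have hsub : ∀ s t : ℝ, s • e - R (t • e) = (s + t / 2) • e := fun s t => by rw [hR]; module
  have hRsub : ∀ s t : ℝ, R (s • e) - R (t • e) = ((t - s) / 2) • e := fun s t => by
    rw [hR, hR]; module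
  refine ⟨fun u v => by rw [smul_sub_add_sub_eq_zero_of_forall_eq_neg_smul hR, norm_zero], ?_, ?_⟩
  · rw [hxe, hye, hRsub, hnorm]
    norm_num
  · rw [hxe, hye, ← sub_smul, hsub, hsub, hsub, hsub]
    simp only [hnorm]
    norm_num
    linarith [matkowski_product_lt]
end

section
/- Let C, Q be nonempty closed convex subsets of a real Hilbert space H and T : H → H a nonzero bounded linear operator, with the solution set K = {x ∈ C : Tx ∈ Q} nonempty. Then x ∈ C satisfies Tx ∈ Q if and only if x is a fixed point of the map x ↦ P_C( x − (1/‖T‖²) T*(I − P_Q)(Tx) ). -/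
/-!
If `Tx ∈ Q` the residual `Tx - P_Q(Tx)` vanishes and the map fixes `x ∈ C`. Conversely, at a
fixed point `x` the variational inequality of `P_C`, tested against a solution `z` (`z ∈ C`,
`Tz ∈ Q`) and pulled through `T*`, gives `⟪u, Tz - Tx⟫ ≥ 0` for the residual `u = Tx - P_Q(Tx)`,
while the variational inequality of `P_Q` gives `⟪u, Tz - P_Q(Tx)⟫ ≤ 0`; subtracting yields
`‖u‖² ≤ 0`.
-/

open scoped RealInnerProductSpace

theorem eq_of_forall_norm_sub_le_of_mem {E : Type*} [NormedAddCommGroup E] {K : Set E}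
    {x p : E} (hmin : ∀ y ∈ K, ‖x - p‖ ≤ ‖x - y‖) (hx : x ∈ K) : p = x := by
  simpa [sub_eq_zero, eq_comm] using hmin x hx

section Projection

variable {H : Type*} [NormedAddCommGroup H] [InnerProductSpace ℝ H] {K : Set H} {x p : H}

theorem real_inner_sub_le_zero_of_forall_norm_sub_le (hK : Convex ℝ K) (hp : p ∈ K)
    (hmin : ∀ y ∈ K, ‖x - p‖ ≤ ‖x - y‖) : ∀ w ∈ K, ⟪x - p, w - p⟫ ≤ 0 :=
  (norm_eq_iInf_iff_real_inner_le_zero hK hp).1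
    (IsMinOn.iInf_eq (f := fun y => ‖x - y‖) hp hmin).symm

theorem mem_of_real_inner_sub_nonneg (hK : Convex ℝ K) (hp : p ∈ K)
    (hmin : ∀ y ∈ K, ‖x - p‖ ≤ ‖x - y‖) {z : H} (hz : z ∈ K) (h : 0 ≤ ⟪x - p, z - x⟫) :
    x ∈ K := by
  have hvi := real_inner_sub_le_zero_of_forall_norm_sub_le hK hp hmin z hz
  have hsplit : ⟪x - p, x - p⟫ = ⟪x - p, z - p⟫ - ⟪x - p, z - x⟫ := by
    rw [← inner_sub_right, sub_sub_sub_cancel_left]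
  have hnorm : ‖x - p‖ ^ 2 ≤ 0 := by
    rw [← real_inner_self_eq_norm_sq, hsplit]
    linarith
  have hres : x - p = 0 := norm_eq_zero.1 (pow_eq_zero_iff two_ne_zero |>.1
    (le_antisymm hnorm (sq_nonneg _)))
  rwa [← sub_eq_zero.1 hres] at hp

theorem real_inner_nonneg_of_forall_norm_sub_smul_le (hK : Convex ℝ K) (hx : x ∈ K) {γ : ℝ}
    (hγ : 0 < γ) {v : H} (hmin : ∀ y ∈ K, ‖x - γ • v - x‖ ≤ ‖x - γ • v - y‖) :
    ∀ z ∈ K, 0 ≤ ⟪v, z - x⟫ := by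
  intro z hz
  have hvi := real_inner_sub_le_zero_of_forall_norm_sub_le hK hx hmin z hz
  rw [sub_sub_cancel_left, inner_neg_left, real_inner_smul_left, neg_nonpos] at hvi
  exact nonneg_of_mul_nonneg_right hvi hγ

end Projection

theorem stmt_15_general {H : Type*} [NormedAddCommGroup H] [InnerProductSpace ℝ H] [CompleteSpace H]
    (C Q : Set H) (hCconv : Convex ℝ C)
    (hQconv : Convex ℝ Q)
    (T : H →L[ℝ] H) (hT : T ≠ 0)
    (PC PQ : H → H)
    (hPC : ∀ x, PC x ∈ C ∧ ∀ y ∈ C, ‖x - PC x‖ ≤ ‖x - y‖)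
    (hPQ : ∀ x, PQ x ∈ Q ∧ ∀ y ∈ Q, ‖x - PQ x‖ ≤ ‖x - y‖)
    (hK : ∃ x ∈ C, T x ∈ Q) :
    ∀ x ∈ C, (T x ∈ Q ↔
      PC (x - (1 / ‖T‖ ^ 2) • (ContinuousLinearMap.adjoint T) (T x - PQ (T x))) = x) := by
  intro x hx
  constructor
  · intro hTx
    rw [eq_of_forall_norm_sub_le_of_mem (hPQ (T x)).2 hTx, sub_self, map_zero, smul_zero,
      sub_zero]
    exact eq_of_forall_norm_sub_le_of_mem (hPC x).2 hx
  · intro hfix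
    obtain ⟨z, hzC, hTz⟩ := hK
    have hγ : (0 : ℝ) < 1 / ‖T‖ ^ 2 := by
      have := norm_pos_iff.2 hT
      positivity
    have hmin := (hPC (x - (1 / ‖T‖ ^ 2) • (ContinuousLinearMap.adjoint T) (T x - PQ (T x)))).2
    rw [hfix] at hmin
    have hstep := real_inner_nonneg_of_forall_norm_sub_smul_le hCconv hx hγ hmin z hzC
    rw [ContinuousLinearMap.adjoint_inner_left, map_sub] at hstep
    exact mem_of_real_inner_sub_nonneg hQconv (hPQ (T x)).1 (hPQ (T x)).2 hTz hstep

theorem stmt_15 {H : Type*} [NormedAddCommGroup H] [InnerProductSpace ℝ H] [CompleteSpace H]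
    (C Q : Set H) (hCne : C.Nonempty) (hCclosed : IsClosed C) (hCconv : Convex ℝ C)
    (hQne : Q.Nonempty) (hQclosed : IsClosed Q) (hQconv : Convex ℝ Q)
    (T : H →L[ℝ] H) (hT : T ≠ 0)
    (PC PQ : H → H)
    (hPC : ∀ x, PC x ∈ C ∧ ∀ y ∈ C, ‖x - PC x‖ ≤ ‖x - y‖)
    (hPQ : ∀ x, PQ x ∈ Q ∧ ∀ y ∈ Q, ‖x - PQ x‖ ≤ ‖x - y‖)
    (hK : ∃ x ∈ C, T x ∈ Q) :
    ∀ x ∈ C, (T x ∈ Q ↔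
      PC (x - (1 / ‖T‖ ^ 2) • (ContinuousLinearMap.adjoint T) (T x - PQ (T x))) = x) :=
  stmt_15_general C Q hCconv hQconv T hT PC PQ hPC hPQ hK
end
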